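/- arXiv:1011.3243 — 3 statements merged into one kernel-verified Lean document; each statement's English description precedes it below -/
import Mathlib

section
/- Let n ≥ 1 and let X and Y be (n,1)-categories. A map F : X → Y of simplicial sets is an inner fibration if and only if it has the right lifting property with respect to the inner horn inclusions Λ[m,k] → Δ[m] for all m and k with 0 < k < m ≤ n. -/
open CategoryTheory Simplicial SSet

/-- A simplicial set `X` has unique liftings along a map `i : A ⟶ B` if every map `A ⟶ X`
extends, via a unique map `B ⟶ X`, along `i`. -/
def HasUniqueLiftsAlong {A B : SSet} (i : A ⟶ B) (X : SSet) : Prop :=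
  ∀ u : A ⟶ X, ∃! w : B ⟶ X, i ≫ w = u

/-- `X` is an `(n,1)`-category (in Lurie's sense): a quasicategory in which every inner horn
`Λ[m, k] → X` with `m > n` extends uniquely to `Δ[m]`. -/
def IsN1Category (n : ℕ) (X : SSet) : Prop :=
  Quasicategory X ∧
    ∀ (m : ℕ) (k : Fin (m + 1)), n < m → 0 < k → k < Fin.last m →
      HasUniqueLiftsAlong ((horn m k).ι) X

/-- A map of simplicial sets is an inner fibration if it has the right lifting property with
respect to every inner horn inclusion. -/
def IsInnerFibration {X Y : SSet} (F : X ⟶ Y) : Prop :=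
  ∀ (m : ℕ) (k : Fin (m + 1)), 0 < k → k < Fin.last m →
    HasLiftingProperty ((horn m k).ι) F

/-- An extension `w` of the top map through `X` is a lift: `w ≫ F` and the bottom map both
extend the same map along `i`, so they agree by uniqueness in `Y`. -/
lemma hasLiftingProperty_of_hasUniqueLiftsAlong {A B X Y : SSet} {i : A ⟶ B} {F : X ⟶ Y}
    (hX : ∀ u : A ⟶ X, ∃ w : B ⟶ X, i ≫ w = u) (hY : HasUniqueLiftsAlong i Y) :
    HasLiftingProperty i F where
  sq_hasLift {f g} sq := by
    obtain ⟨w, hw⟩ := hX f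
    obtain ⟨_, _, hY_unique⟩ := hY (f ≫ F)
    have hwF : i ≫ w ≫ F = f ≫ F := by rw [← Category.assoc, hw]
    exact ⟨⟨⟨w, hw, (hY_unique _ hwF).trans (hY_unique _ sq.w.symm).symm⟩⟩⟩

theorem stmt4_general (n : ℕ) (X Y : SSet)
    (hX : IsN1Category n X) (hY : IsN1Category n Y) (F : X ⟶ Y) :
    IsInnerFibration F ↔
      ∀ (m : ℕ) (k : Fin (m + 1)), m ≤ n → 0 < k → k < Fin.last m →
        HasLiftingProperty ((horn m k).ι) F := by
  refine ⟨fun hF m k _ => hF m k, fun hF m k hk hk' => ?_⟩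
  rcases le_or_gt m n with hm | hm
  · exact hF m k hm hk hk'
  · exact hasLiftingProperty_of_hasUniqueLiftsAlong
      (fun u => (hX.2 m k hm hk hk' u).exists) (hY.2 m k hm hk hk')

theorem stmt4 (n : ℕ) (hn : 1 ≤ n) (X Y : SSet)
    (hX : IsN1Category n X) (hY : IsN1Category n Y) (F : X ⟶ Y) :
    IsInnerFibration F ↔
      ∀ (m : ℕ) (k : Fin (m + 1)), m ≤ n → 0 < k → k < Fin.last m →
        HasLiftingProperty ((horn m k).ι) F :=
  stmt4_general n X Y hX hY F
end

section
/- Let C be a category and X, Y objects of C. Suppose given spans a : U → X, b : U → Y and c : V → Y, d : V → X such that the pullback P of b and c exists, with projections p : P → U and q : P → V, and the pullback Q of d and a exists, with projections r : Q → V and s : Q → U. Suppose there is an isomorphism e : P ≅ X with p ≫ a = e.hom and q ≫ d = e.hom, and an isomorphism e' : Q ≅ Y with r ≫ c = e'.hom and s ≫ b = e'.hom (i.e. the two composite spans, formed by pullback, are isomorphic as spans to the identity spans on X and on Y respectively). Then a, b, c and d are all isomorphisms; in particular X and Y are isomorphic in C. (This proves that two objects are equivalent in the bicategory of spans in C if and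 only if they are isomorphic in C.) -/
/-!
Each of `a, b, c, d` is split epi, being the second factor of a composite equal to an
isomorphism (e.g. `p ≫ a = e.hom`), and each leg `p, q, r, s` of the two pullbacks is mono for
the same reason. Monomorphisms descend along split epimorphisms: in a pullback square whose
first projection is mono and whose bottom map is split epi, the other map is mono. Applied to
the four ways of reading the two squares this makes `a, b, c, d` mono, hence isomorphisms.
-/

open CategoryTheory Limits

namespace CategoryTheory

variable {C : Type*} [Category C]

theorem isSplitEpi_of_isSplitEpi_fac {X Y Z : C} {f : X ⟶ Y} {g : Y ⟶ Z} {h : X ⟶ Z}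
    [IsSplitEpi h] (w : f ≫ g = h) : IsSplitEpi g :=
  IsSplitEpi.mk' ⟨section_ h ≫ f, by simp [w]⟩

theorem IsPullback.mono_of_mono_fst_of_isSplitEpi {A X Y Z : C} {fst : A ⟶ X} {snd : A ⟶ Y}
    {f : X ⟶ Z} {g : Y ⟶ Z} (h : IsPullback fst snd f g) [Mono fst] [IsSplitEpi f] :
    Mono g where
  right_cancellation u v huv := by
    have hu : (u ≫ g ≫ section_ f) ≫ f = u ≫ g := by simp
    have hv : (u ≫ g ≫ section_ f) ≫ f = v ≫ g := hu.trans huv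
    have hlift : h.lift _ u hu = h.lift _ v hv := by
      rw [← cancel_mono fst]
      simp
    simpa using congrArg (· ≫ snd) hlift

end CategoryTheory

theorem stmt7 {C : Type*} [Category C] {X Y U V P Q : C}
    (a : U ⟶ X) (b : U ⟶ Y) (c : V ⟶ Y) (d : V ⟶ X)
    (p : P ⟶ U) (q : P ⟶ V) (hP : IsPullback p q b c)
    (r : Q ⟶ V) (s : Q ⟶ U) (hQ : IsPullback r s d a)
    (e : P ≅ X) (he₁ : p ≫ a = e.hom) (he₂ : q ≫ d = e.hom)
    (e' : Q ≅ Y) (he₁' : r ≫ c = e'.hom) (he₂' : s ≫ b = e'.hom) :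
    IsIso a ∧ IsIso b ∧ IsIso c ∧ IsIso d ∧ Nonempty (X ≅ Y) := by
  have : IsSplitEpi a := isSplitEpi_of_isSplitEpi_fac he₁
  have : IsSplitEpi b := isSplitEpi_of_isSplitEpi_fac he₂'
  have : IsSplitEpi c := isSplitEpi_of_isSplitEpi_fac he₁'
  have : IsSplitEpi d := isSplitEpi_of_isSplitEpi_fac he₂
  have : Mono p := mono_of_mono_fac he₁
  have : Mono q := mono_of_mono_fac he₂
  have : Mono r := mono_of_mono_fac he₁'
  have : Mono s := mono_of_mono_fac he₂'
  have : Mono a := hQ.mono_of_mono_fst_of_isSplitEpi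
  have : Mono b := hP.flip.mono_of_mono_fst_of_isSplitEpi
  have : Mono c := hP.mono_of_mono_fst_of_isSplitEpi
  have : Mono d := hQ.flip.mono_of_mono_fst_of_isSplitEpi
  have : IsIso a := isIso_of_mono_of_isSplitEpi a
  have : IsIso b := isIso_of_mono_of_isSplitEpi b
  exact ⟨inferInstance, inferInstance, isIso_of_mono_of_isSplitEpi c,
    isIso_of_mono_of_isSplitEpi d, ⟨(asIso a).symm ≪≫ asIso b⟩⟩
end

section
/- Mackey property (Beck–Chevalley for finite sets, fibrewise form): let W, X, Y, Z be finite types with maps f : W → X, α : W → Y, β : X → Z, g : Y → Z such that β ∘ f = g ∘ α, and suppose the square is a pullback of types, i.e. the induced map W → {p : X × Y // β p.1 = g p.2}, w ↦ (f w, α w), is a bijection. Let A : Y → Type be a family of finite types. Then for every x : X there is an equivalence (∀ w : {w : W // f w = x}, A (α w)) ≃ (∀ y : {y : Y // g y = β x}, A y); that is, the fibre over x of the pushforward along f of the pullback along α of A is equivalent to the fibre over x of the pullback along β of the pushforward along g of A. -/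
/-! In a pullback square `α` restricts to a bijection from the fibre of `f` over `x` onto the
fibre of `g` over `β x`, and both sides are products of `A` indexed by these fibres, so
reindexing along that bijection gives the equivalence. -/

section PullbackFibers

variable {W X Y Z : Type*} {f : W → X} {α : W → Y} {β : X → Z} {g : Y → Z}

theorem bijective_restrict_fiber_of_isPullback (hcomm : ∀ w, β (f w) = g (α w))
    (hpb : Function.Bijective
      (fun w : W => (⟨(f w, α w), hcomm w⟩ : {p : X × Y // β p.1 = g p.2})))
    (x : X) :
    Function.Bijective (fun w : {w : W // f w = x} =>
      (⟨α w.1, by rw [← hcomm, w.2]⟩ : {y : Y // g y = β x})) := by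
  constructor
  · rintro ⟨a, rfl⟩ ⟨b, hb⟩ hab
    have hα : α a = α b := congrArg Subtype.val hab
    exact Subtype.ext (hpb.1 (Subtype.ext (Prod.ext hb.symm hα)))
  · rintro ⟨y, hy⟩
    obtain ⟨w, hw⟩ := hpb.2 ⟨(x, y), hy.symm⟩
    have hfw : f w = x := congrArg (fun p => p.1.1) hw
    have hαw : α w = y := congrArg (fun p => p.1.2) hw
    exact ⟨⟨w, hfw⟩, Subtype.ext hαw⟩

noncomputable def fiberEquivOfIsPullback (hcomm : ∀ w, β (f w) = g (α w))
    (hpb : Function.Bijective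
      (fun w : W => (⟨(f w, α w), hcomm w⟩ : {p : X × Y // β p.1 = g p.2})))
    (x : X) : {w : W // f w = x} ≃ {y : Y // g y = β x} :=
  Equiv.ofBijective _ (bijective_restrict_fiber_of_isPullback hcomm hpb x)

end PullbackFibers

theorem stmt8 (W X Y Z : Type) [Finite W] [Finite X] [Finite Y] [Finite Z]
    (f : W → X) (α : W → Y) (β : X → Z) (g : Y → Z)
    (hcomm : ∀ w : W, β (f w) = g (α w))
    (hpb : Function.Bijective
      (fun w : W => (⟨(f w, α w), hcomm w⟩ : {p : X × Y // β p.1 = g p.2})))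
    (A : Y → Type) [∀ y : Y, Finite (A y)] (x : X) :
    Nonempty ((∀ w : {w : W // f w = x}, A (α w.1)) ≃ (∀ y : {y : Y // g y = β x}, A y.1)) :=
  ⟨Equiv.piCongrLeft (fun y => A y.1) (fiberEquivOfIsPullback hcomm hpb x)⟩
end
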